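/- arXiv:1410.3155 — 2 statements merged into one kernel-verified Lean document; each statement's English description precedes it below -/
import Mathlib

section
/- For every real number a < 1 and all integers n ≥ 1, the generalized Stirling numbers satisfy the boundary values S_a(n,1) = Γ(n − a)/Γ(1 − a) and S_a(n,n) = 1, and the recursion S_a(n+1,l) = (n − a·l)·S_a(n,l) + S_a(n,l−1) for all 1 ≤ l ≤ n+1 (with the convention S_a(n,l) = 0 for l > n). -/
open scoped Classical BigOperators

/-- Generalized Stirling numbers of the first kind:
`S_a(n,l) = (n!/l!) · Σ over compositions of n into l positive parts of
∏ Γ(n_k − a)/(n_k!·Γ(1−a))`. -/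
noncomputable def genStirling (a : ℝ) (n l : ℕ) : ℝ :=
  (n.factorial : ℝ) / (l.factorial : ℝ) *
    ∑ f ∈ (Finset.Nat.antidiagonalTuple l n).filter (fun f => ∀ k, 0 < f k),
      ∏ k, Real.Gamma ((f k : ℝ) - a) / ((f k).factorial * Real.Gamma (1 - a))

/-!
`S_a(n,l)` is `n!/l!` times the `n`-th coefficient of `φ^l`, where
`φ = ∑_{m ≥ 1} Γ(m - a)/(m! Γ(1 - a)) X^m`. Since `Γ(m + 1 - a) = (m - a) Γ(m - a)`, this series
satisfies `(1 - X) φ' = 1 - a φ`, hence `(1 - X) (φ^l)' = l (φ^(l-1) - a φ^l)`; comparing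
coefficients of `X^n` gives the recursion. The boundary values come from `φ = X + O(X²)`.
-/

open PowerSeries

namespace PowerSeries

section CommSemiring

variable {R : Type*} [CommSemiring R]

theorem coeff_pow_eq_sum_antidiagonalTuple (φ : R⟦X⟧) (l n : ℕ) :
    coeff n (φ ^ l) = ∑ f ∈ Finset.Nat.antidiagonalTuple l n, ∏ k, coeff (f k) φ := by
  rw [← Finset.piAntidiag_univ_fin_eq_antidiagonalTuple, ← Fin.prod_const l φ, coeff_prod,
    Finset.finsuppAntidiag, Finset.sum_map, ← Finset.sum_attach (Finset.piAntidiag _ _)]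
  rfl

theorem coeff_X_mul_derivative (φ : R⟦X⟧) (n : ℕ) :
    coeff n (X * d⁄dX R φ) = n * coeff n φ := by
  cases n with
  | zero => simp
  | succ n => rw [coeff_succ_X_mul, coeff_derivative, Nat.cast_succ, mul_comm]

theorem coeff_pow_self_of_constantCoeff_eq_zero {φ : R⟦X⟧} (hφ : constantCoeff φ = 0)
    (n : ℕ) : coeff n (φ ^ n) = coeff 1 φ ^ n := by
  obtain ⟨ψ, rfl⟩ := X_dvd_iff.mpr hφ
  simpa [mul_pow] using coeff_X_pow_mul (ψ ^ n) n 0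

end CommSemiring

section CommRing

variable {R : Type*} [CommRing R]

theorem coeff_one_sub_X_mul_derivative (φ : R⟦X⟧) (n : ℕ) :
    coeff n ((1 - X) * d⁄dX R φ) = (n + 1) * coeff (n + 1) φ - n * coeff n φ := by
  rw [sub_mul, one_mul, map_sub, coeff_derivative, coeff_X_mul_derivative, mul_comm]

theorem one_sub_X_mul_derivative_pow {φ : R⟦X⟧} {a : R}
    (hφ : (1 - X) * d⁄dX R φ = 1 - C a * φ) (l : ℕ) :
    (1 - X) * d⁄dX R (φ ^ l) = l • (φ ^ (l - 1) - C a * φ ^ l) := by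
  cases l with
  | zero => simp
  | succ l =>
    rw [Derivation.leibniz_pow, smul_eq_mul, mul_smul_comm, mul_left_comm, hφ,
      Nat.add_sub_cancel, pow_succ]
    ring

theorem succ_mul_coeff_succ_pow {φ : R⟦X⟧} {a : R}
    (hφ : (1 - X) * d⁄dX R φ = 1 - C a * φ) (l n : ℕ) :
    (n + 1) * coeff (n + 1) (φ ^ l)
      = (n - a * l) * coeff n (φ ^ l) + l * coeff n (φ ^ (l - 1)) := by
  have h := congrArg (coeff n) (one_sub_X_mul_derivative_pow hφ l)
  rw [coeff_one_sub_X_mul_derivative, map_nsmul, nsmul_eq_mul, map_sub, coeff_C_mul] at h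
  linear_combination h

end CommRing

end PowerSeries

noncomputable def genStirlingSeries (a : ℝ) : ℝ⟦X⟧ :=
  mk fun m => if m = 0 then 0 else Real.Gamma (m - a) / (m.factorial * Real.Gamma (1 - a))

namespace genStirlingSeries

variable {a : ℝ}

theorem coeff_of_ne_zero {m : ℕ} (hm : m ≠ 0) :
    coeff m (genStirlingSeries a) = Real.Gamma (m - a) / (m.factorial * Real.Gamma (1 - a)) := by
  simp [genStirlingSeries, hm]

theorem constantCoeff_eq_zero : constantCoeff (genStirlingSeries a) = 0 := by
  simp [genStirlingSeries, ← coeff_zero_eq_constantCoeff_apply]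

theorem coeff_one (ha : a < 1) : coeff 1 (genStirlingSeries a) = 1 := by
  have : Real.Gamma (1 - a) ≠ 0 := (Real.Gamma_pos_of_pos (by linarith)).ne'
  simp [coeff_of_ne_zero one_ne_zero, this]

theorem succ_mul_coeff_succ (ha : a < 1) {m : ℕ} (hm : m ≠ 0) :
    (m + 1) * coeff (m + 1) (genStirlingSeries a) = (m - a) * coeff m (genStirlingSeries a) := by
  have hma : (m : ℝ) - a ≠ 0 := by
    have : (1 : ℝ) ≤ m := by exact_mod_cast Nat.one_le_iff_ne_zero.mpr hm
    linarith
  have hGamma : Real.Gamma ((m + 1 : ℕ) - a) = (m - a) * Real.Gamma (m - a) := by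
    rw [Nat.cast_succ, add_sub_right_comm, Real.Gamma_add_one hma]
  have hfact : (m.factorial : ℝ) ≠ 0 := by positivity
  rw [coeff_of_ne_zero hm, coeff_of_ne_zero m.succ_ne_zero, hGamma, Nat.factorial_succ,
    Nat.cast_mul]
  field_simp
  push_cast
  ring

theorem one_sub_X_mul_derivative (ha : a < 1) :
    (1 - X) * d⁄dX ℝ (genStirlingSeries a) = 1 - C a * genStirlingSeries a := by
  ext n
  rw [coeff_one_sub_X_mul_derivative, map_sub, coeff_C_mul, PowerSeries.coeff_one]
  cases n with
  | zero => simp [coeff_one ha, coeff_zero_eq_constantCoeff_apply, constantCoeff_eq_zero]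
  | succ n =>
    have h := succ_mul_coeff_succ ha n.add_one_ne_zero
    push_cast at h ⊢
    linear_combination h

end genStirlingSeries

theorem genStirling_eq_coeff_pow (a : ℝ) (n l : ℕ) :
    genStirling a n l = n.factorial / l.factorial * coeff n (genStirlingSeries a ^ l) := by
  rw [genStirling, coeff_pow_eq_sum_antidiagonalTuple]
  refine congrArg _ ((Finset.sum_congr rfl fun f hf => ?_).trans (Finset.sum_filter_of_ne ?_))
  · refine Finset.prod_congr rfl fun k _ => ?_
    exact (genStirlingSeries.coeff_of_ne_zero ((Finset.mem_filter.mp hf).2 k).ne').symm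
  · intro f _ hf k
    refine Nat.pos_of_ne_zero fun hk => hf (Finset.prod_eq_zero (Finset.mem_univ k) ?_)
    rw [hk, coeff_zero_eq_constantCoeff_apply, genStirlingSeries.constantCoeff_eq_zero]

section

variable {a : ℝ}

theorem genStirling_one {n : ℕ} (hn : n ≠ 0) :
    genStirling a n 1 = Real.Gamma (n - a) / Real.Gamma (1 - a) := by
  have hfact : (n.factorial : ℝ) ≠ 0 := by positivity
  rw [genStirling_eq_coeff_pow, pow_one, genStirlingSeries.coeff_of_ne_zero hn]
  field_simp
  simp

theorem genStirling_self (ha : a < 1) (n : ℕ) : genStirling a n n = 1 := by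
  have hfact : (n.factorial : ℝ) ≠ 0 := by positivity
  rw [genStirling_eq_coeff_pow, coeff_pow_self_of_constantCoeff_eq_zero
    genStirlingSeries.constantCoeff_eq_zero, genStirlingSeries.coeff_one ha, one_pow, mul_one,
    div_self hfact]

theorem genStirling_succ (ha : a < 1) (n : ℕ) {l : ℕ} (hl : l ≠ 0) :
    genStirling a (n + 1) l = (n - a * l) * genStirling a n l + genStirling a n (l - 1) := by
  obtain ⟨k, rfl⟩ := Nat.exists_eq_add_one_of_ne_zero hl
  have h := succ_mul_coeff_succ_pow (genStirlingSeries.one_sub_X_mul_derivative ha) (k + 1) n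
  have hn : (n.factorial : ℝ) ≠ 0 := by positivity
  have hk : (k.factorial : ℝ) ≠ 0 := by positivity
  simp only [genStirling_eq_coeff_pow, Nat.add_sub_cancel, Nat.factorial_succ] at h ⊢
  push_cast at h ⊢
  field_simp
  linear_combination h

end

/-- Boundary values and recursion for the generalized Stirling numbers:
for a < 1 and n ≥ 1, S_a(n,1) = Γ(n−a)/Γ(1−a), S_a(n,n) = 1, and
S_a(n+1,l) = (n − a·l)·S_a(n,l) + S_a(n,l−1) for all 1 ≤ l ≤ n+1
(with the convention S_a(n,l) = 0 for l > n, which holds by definition). -/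
theorem genStirling_boundary_and_recursion (a : ℝ) (ha : a < 1) (n : ℕ) (hn : 1 ≤ n) :
    genStirling a n 1 = Real.Gamma ((n : ℝ) - a) / Real.Gamma (1 - a) ∧
    genStirling a n n = 1 ∧
    ∀ l : ℕ, 1 ≤ l → l ≤ n + 1 →
      genStirling a (n + 1) l
        = ((n : ℝ) - a * (l : ℝ)) * genStirling a n l + genStirling a n (l - 1) :=
  ⟨genStirling_one (by omega), genStirling_self ha n,
    fun _ hl _ => genStirling_succ ha n (by omega)⟩
end

section
/- Let 1 ≤ i ≤ n be integers, let γ0 > 0, a < 1, 0 < p < 1 be real, and let σ be a set partition of {1,…,i} with j blocks A_1,…,A_j. Then the sum of w_n(π) over all set partitions π of {1,…,n} whose restriction to {1,…,i} equals σ is R_{n,γ0,a,p}(i,j) · γ0^j · p^{−a·j} · ∏_{k=1}^j Γ(|A_k| − a)/Γ(1 − a) / D_n (the size-dependent exchangeable partition probability function). -/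
open scoped Classical BigOperators

/-- `D_n = Σ_{ℓ=0}^n γ0^ℓ · p^{−a·ℓ} · S_a(n,ℓ)`. -/
noncomputable def Dsum (γ0 a p : ℝ) (n : ℕ) : ℝ :=
  ∑ l ∈ Finset.range (n + 1), γ0 ^ l * p ^ (-(a * (l : ℝ))) * genStirling a n l

/-- A finite family of blocks forming a set partition of `Fin n`. -/
def IsPartition {n : ℕ} (P : Finset (Finset (Fin n))) : Prop :=
  ∅ ∉ P ∧ ∀ x : Fin n, ∃! B, B ∈ P ∧ x ∈ B

/-- The finite set of all set partitions of `{1,…,n}` (modeled as `Fin n`). -/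
noncomputable def partitionsOf (n : ℕ) : Finset (Finset (Finset (Fin n))) :=
  Finset.univ.filter IsPartition

/-- The generalized Chinese restaurant sampling formula weight of a family of blocks
`P`, for sample size `m`:
`w_m(P) = γ0^{|P|} · p^{−a·|P|} · ∏_{B∈P} Γ(|B|−a)/Γ(1−a) / D_m`. -/
noncomputable def crsfW (γ0 a p : ℝ) (m : ℕ) {n : ℕ} (P : Finset (Finset (Fin n))) : ℝ :=
  γ0 ^ P.card * p ^ (-(a * (P.card : ℝ))) *
    (∏ B ∈ P, Real.Gamma ((B.card : ℝ) - a) / Real.Gamma (1 - a)) / Dsum γ0 a p m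

/-- The restriction of a family of blocks to the first `i` elements of `Fin n`:
intersect each block with `{x | x < i}` and drop the empty pieces. -/
noncomputable def restrictFirst (n i : ℕ) (P : Finset (Finset (Fin n))) :
    Finset (Finset (Fin n)) :=
  (P.image fun B => B.filter fun x => (x : ℕ) < i).filter fun B => B.Nonempty

/-- A set partition of the first `i` elements of `Fin n`. -/
def IsPartitionOn (n i : ℕ) (P : Finset (Finset (Fin n))) : Prop :=
  ∅ ∉ P ∧ (∀ B ∈ P, ∀ x ∈ B, (x : ℕ) < i) ∧
    ∀ x : Fin n, (x : ℕ) < i → ∃! B, B ∈ P ∧ x ∈ B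

/-- The backward recursion `R_{n,γ0,a,p}(i,j)`: `R(n,j) = 1` and
`R(i,j) = (i − a·j)·R(i+1,j) + γ0·p^{−a}·R(i+1,j+1)` for `i < n`. -/
noncomputable def Rrec (γ0 a p : ℝ) (n : ℕ) : ℕ → ℕ → ℝ
  | i, j =>
    if _ : n ≤ i then 1
    else ((i : ℝ) - a * (j : ℝ)) * Rrec γ0 a p n (i + 1) j
      + γ0 * p ^ (-a) * Rrec γ0 a p n (i + 1) (j + 1)
  termination_by i _ => n - i
  decreasing_by all_goals omega

/-! Backward induction on `i`. A partition of `{0,…,i}` whose restriction to `{0,…,i-1}`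
is `σ` arises by putting `i` either into a new block or into one of the `j` blocks `A` of `σ`.
The first choice multiplies the weight by `γ0·p^{-a}`, the second by `|A| - a`
(`Γ(s+1) = s Γ(s)`). Since the block sizes of `σ` add up to `i`, the fibre sums obey the
recursion defining `R`, and for `i ≥ n` the fibre is `{σ}` itself. -/

section Blocks

variable {α : Type*} [DecidableEq α]

def addToBlock (σ : Finset (Finset α)) (x : α) (A : Finset α) : Finset (Finset α) :=
  insert (insert x A) (σ.erase A)

/-- The block `∅` stands for opening the new block `{x}`, see `addToBlock_empty`. -/
def extensions (σ : Finset (Finset α)) (x : α) : Finset (Finset (Finset α)) :=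
  (insert ∅ σ).image (addToBlock σ x)

lemma addToBlock_empty {σ : Finset (Finset α)} (hσ : ∅ ∉ σ) (x : α) :
    addToBlock σ x ∅ = insert {x} σ := by
  rw [addToBlock, Finset.erase_eq_of_notMem hσ]; rfl

lemma card_addToBlock {σ : Finset (Finset α)} {x : α} (hx : ∀ B ∈ σ, x ∉ B)
    {A : Finset α} (hA : A ∈ σ) : (addToBlock σ x A).card = σ.card := by
  rw [addToBlock, Finset.card_insert_of_notMem, Finset.card_erase_add_one hA]
  exact fun h => hx _ (Finset.mem_of_mem_erase h) (Finset.mem_insert_self x A)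

lemma addToBlock_injOn {σ : Finset (Finset α)} {x : α} (hx : ∀ B ∈ σ, x ∉ B) :
    Set.InjOn (addToBlock σ x) ↑(insert ∅ σ) := by
  have hxA : ∀ A ∈ insert ∅ σ, x ∉ A := by
    simpa only [Finset.forall_mem_insert] using ⟨Finset.notMem_empty x, hx⟩
  intro A hA A' hA' h
  have hmem : insert x A ∈ addToBlock σ x A' := h ▸ Finset.mem_insert_self _ _
  rcases Finset.mem_insert.mp hmem with h' | h'
  · rw [← Finset.erase_insert (hxA A hA), h', Finset.erase_insert (hxA A' hA')]
  · exact absurd (Finset.mem_insert_self x A) (hx _ (Finset.mem_of_mem_erase h'))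

end Blocks

section Restriction

variable {n i : ℕ} {σ : Finset (Finset (Fin n))} {x : Fin n}

lemma mem_restrictFirst {P : Finset (Finset (Fin n))} {C : Finset (Fin n)} :
    C ∈ restrictFirst n i P ↔
      (∃ B ∈ P, (B.filter fun x : Fin n => (x : ℕ) < i) = C) ∧ C.Nonempty := by
  rw [restrictFirst, Finset.mem_filter, Finset.mem_image]

lemma restrictFirst_insert (B : Finset (Fin n)) (P : Finset (Finset (Fin n))) :
    restrictFirst n i (insert B P) =
      if (B.filter fun x : Fin n => (x : ℕ) < i).Nonempty then
        insert (B.filter fun x : Fin n => (x : ℕ) < i) (restrictFirst n i P)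
      else restrictFirst n i P := by
  rw [restrictFirst, restrictFirst, Finset.image_insert, Finset.filter_insert]

lemma restrictFirst_eq_self {P : Finset (Finset (Fin n))} (hP : ∅ ∉ P)
    (hlt : ∀ B ∈ P, ∀ x ∈ B, (x : ℕ) < i) : restrictFirst n i P = P := by
  have himage : P.image (fun B => B.filter fun x : Fin n => (x : ℕ) < i) = P := by
    conv_rhs => rw [← Finset.image_id (s := P)]
    exact Finset.image_congr fun B hB => Finset.filter_true_of_mem (hlt B hB)
  rw [restrictFirst, himage]
  exact Finset.filter_true_of_mem fun B hB =>
    Finset.nonempty_iff_ne_empty.mpr (ne_of_mem_of_not_mem hB hP)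

lemma restrictFirst_restrictFirst {k : ℕ} (hik : i ≤ k) (P : Finset (Finset (Fin n))) :
    restrictFirst n i (restrictFirst n k P) = restrictFirst n i P := by
  have hfilter : ∀ B : Finset (Fin n), ((B.filter fun x : Fin n => (x : ℕ) < k).filter
      fun x : Fin n => (x : ℕ) < i) = B.filter fun x : Fin n => (x : ℕ) < i := fun B => by
    rw [Finset.filter_filter]
    exact Finset.filter_congr fun x _ => and_iff_right_of_imp fun h => h.trans_le hik
  ext C
  simp only [restrictFirst, Finset.mem_filter, Finset.mem_image]
  constructor
  · rintro ⟨⟨_, ⟨⟨B, hB, rfl⟩, -⟩, rfl⟩, hne⟩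
    exact ⟨⟨B, hB, (hfilter B).symm⟩, hne⟩
  · rintro ⟨⟨B, hB, rfl⟩, hne⟩
    exact ⟨⟨_, ⟨⟨B, hB, rfl⟩, hne.mono (hfilter B ▸ Finset.filter_subset _ _)⟩, hfilter B⟩, hne⟩

lemma IsPartitionOn.notMem (hσ : IsPartitionOn n i σ) (hx : (x : ℕ) = i) {B : Finset (Fin n)}
    (hB : B ∈ σ) : x ∉ B :=
  fun h => (hσ.2.1 B hB x h).ne hx

lemma IsPartitionOn.val_lt_of_mem_insert_empty (hσ : IsPartitionOn n i σ)
    {A : Finset (Fin n)} (hA : A ∈ insert ∅ σ) : ∀ y ∈ A, (y : ℕ) < i := by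
  rcases Finset.mem_insert.mp hA with rfl | hA
  · simp
  · exact hσ.2.1 A hA

lemma isPartitionOn_addToBlock (hσ : IsPartitionOn n i σ) (hx : (x : ℕ) = i)
    {A : Finset (Fin n)} (hA : A ∈ insert ∅ σ) :
    IsPartitionOn n (i + 1) (addToBlock σ x A) := by
  refine ⟨fun h => ?_, fun B hB y hy => ?_, fun y hy => ?_⟩
  · rcases Finset.mem_insert.mp h with h | h
    · exact Finset.insert_ne_empty _ _ h.symm
    · exact hσ.1 (Finset.mem_of_mem_erase h)
  · rcases Finset.mem_insert.mp hB with rfl | hB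
    · rcases Finset.mem_insert.mp hy with rfl | hy
      · exact hx ▸ Nat.lt_succ_self _
      · exact (hσ.val_lt_of_mem_insert_empty hA y hy).trans (Nat.lt_succ_self i)
    · exact (hσ.2.1 B (Finset.mem_of_mem_erase hB) y hy).trans (Nat.lt_succ_self i)
  by_cases hyA : y ∈ insert x A
  · refine ⟨insert x A, ⟨Finset.mem_insert_self _ _, hyA⟩, ?_⟩
    rintro C ⟨hC, hyC⟩
    rcases Finset.mem_insert.mp hC with rfl | hC
    · rfl
    obtain ⟨hCA, hCσ⟩ := Finset.mem_erase.mp hC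
    have hyA' : y ∈ A :=
      (Finset.mem_insert.mp hyA).resolve_left fun h => hσ.notMem hx hCσ (h ▸ hyC)
    have hAσ : A ∈ σ :=
      (Finset.mem_insert.mp hA).resolve_left fun h => by simp [h] at hyA'
    exact absurd ((hσ.2.2 y (hσ.2.1 A hAσ y hyA')).unique ⟨hCσ, hyC⟩ ⟨hAσ, hyA'⟩) hCA
  · have hyi : (y : ℕ) < i :=
      lt_of_le_of_ne (Nat.lt_succ_iff.mp hy)
        fun h => hyA (Fin.ext (h.trans hx.symm) ▸ Finset.mem_insert_self _ _)
    obtain ⟨B, ⟨hBσ, hyB⟩, hB⟩ := hσ.2.2 y hyi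
    have hBA : B ≠ A := fun h => hyA (Finset.mem_insert_of_mem (h ▸ hyB))
    refine ⟨B, ⟨Finset.mem_insert_of_mem (Finset.mem_erase.mpr ⟨hBA, hBσ⟩), hyB⟩, ?_⟩
    rintro C ⟨hC, hyC⟩
    rcases Finset.mem_insert.mp hC with rfl | hC
    · exact absurd hyC hyA
    · exact hB C ⟨Finset.mem_of_mem_erase hC, hyC⟩

lemma restrictFirst_addToBlock (hσ : IsPartitionOn n i σ) (hx : (x : ℕ) = i)
    {A : Finset (Fin n)} (hA : A ∈ insert ∅ σ) :
    restrictFirst n i (addToBlock σ x A) = σ := by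
  have hAi : (A.filter fun x : Fin n => (x : ℕ) < i) = A :=
    Finset.filter_true_of_mem (hσ.val_lt_of_mem_insert_empty hA)
  rw [addToBlock, restrictFirst_insert, Finset.filter_insert, if_neg hx.not_lt, hAi,
    restrictFirst_eq_self (fun h => hσ.1 (Finset.mem_of_mem_erase h))
      fun B hB => hσ.2.1 B (Finset.mem_of_mem_erase hB)]
  split_ifs with hne
  · exact Finset.insert_erase ((Finset.mem_insert.mp hA).resolve_left hne.ne_empty)
  · rw [Finset.not_nonempty_iff_eq_empty.mp hne]
    exact Finset.erase_eq_of_notMem hσ.1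

lemma IsPartition.isPartitionOn_restrictFirst {P : Finset (Finset (Fin n))} (hP : IsPartition P)
    (i : ℕ) : IsPartitionOn n i (restrictFirst n i P) := by
  refine ⟨fun h => ?_, fun C hC y hy => ?_, fun y hy => ?_⟩
  · simpa using (mem_restrictFirst.mp h).2
  · obtain ⟨⟨B, -, rfl⟩, -⟩ := mem_restrictFirst.mp hC
    exact (Finset.mem_filter.mp hy).2
  obtain ⟨B, ⟨hBP, hyB⟩, hB⟩ := hP.2 y
  have hyB' : y ∈ B.filter fun x : Fin n => (x : ℕ) < i := Finset.mem_filter.mpr ⟨hyB, hy⟩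
  refine ⟨_, ⟨mem_restrictFirst.mpr ⟨⟨B, hBP, rfl⟩, ⟨y, hyB'⟩⟩, hyB'⟩, ?_⟩
  rintro C ⟨hC, hyC⟩
  obtain ⟨⟨B', hB'P, rfl⟩, -⟩ := mem_restrictFirst.mp hC
  rw [hB B' ⟨hB'P, (Finset.mem_filter.mp hyC).1⟩]

lemma IsPartitionOn.mem_extensions_restrictFirst {τ : Finset (Finset (Fin n))}
    (hτ : IsPartitionOn n (i + 1) τ) (hx : (x : ℕ) = i) :
    τ ∈ extensions (restrictFirst n i τ) x := by
  obtain ⟨B₀, ⟨hB₀, hxB₀⟩, hB₀u⟩ := hτ.2.2 x (hx ▸ Nat.lt_succ_self i)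
  have hB₀i : (B₀.filter fun y : Fin n => (y : ℕ) < i) = B₀.erase x := by
    ext y
    simp only [Finset.mem_filter, Finset.mem_erase, ne_eq, Fin.ext_iff, hx]
    by_cases hyB₀ : y ∈ B₀
    · have := hτ.2.1 B₀ hB₀ y hyB₀
      simp only [hyB₀, true_and, and_true]
      omega
    · simp [hyB₀]
  have hτ₀ : ∅ ∉ τ.erase B₀ := fun h => hτ.1 (Finset.mem_of_mem_erase h)
  have hτi : restrictFirst n i (τ.erase B₀) = τ.erase B₀ := by
    refine restrictFirst_eq_self hτ₀ fun B hB y hyB => ?_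
    have hyx : y ≠ x := fun h =>
      (Finset.mem_erase.mp hB).1 (hB₀u B ⟨Finset.mem_of_mem_erase hB, h ▸ hyB⟩)
    have := hτ.2.1 B (Finset.mem_of_mem_erase hB) y hyB
    rw [Ne, Fin.ext_iff, hx] at hyx
    omega
  have hτrestrict : restrictFirst n i τ = if (B₀.erase x).Nonempty
      then insert (B₀.erase x) (τ.erase B₀) else τ.erase B₀ := by
    conv_lhs => rw [← Finset.insert_erase hB₀]
    rw [restrictFirst_insert, hB₀i, hτi]
  suffices insert B₀ (τ.erase B₀) ∈ extensions (restrictFirst n i τ) x by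
    rwa [Finset.insert_erase hB₀] at this
  rw [hτrestrict, extensions, Finset.mem_image]
  split_ifs with hne
  · refine ⟨B₀.erase x, Finset.mem_insert_of_mem (Finset.mem_insert_self _ _), ?_⟩
    have hnotMem : B₀.erase x ∉ τ.erase B₀ := fun h => by
      obtain ⟨y, hy⟩ := hne
      have hyB₀ := Finset.mem_of_mem_erase hy
      exact (Finset.mem_erase.mp h).1 ((hτ.2.2 y (hτ.2.1 B₀ hB₀ y hyB₀)).unique
        ⟨Finset.mem_of_mem_erase h, hy⟩ ⟨hB₀, hyB₀⟩)
    rw [addToBlock, Finset.erase_insert hnotMem, Finset.insert_erase hxB₀]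
  · refine ⟨∅, Finset.mem_insert_self _ _, ?_⟩
    have hB₀x : B₀ = {x} := (Finset.erase_eq_empty_iff _ _).mp
      (Finset.not_nonempty_iff_eq_empty.mp hne) |>.resolve_left (Finset.ne_empty_of_mem hxB₀)
    rw [addToBlock_empty hτ₀, hB₀x]

lemma IsPartitionOn.sum_card (hσ : IsPartitionOn n i σ) (hin : i ≤ n) :
    ∑ A ∈ σ, A.card = i := by
  have hdisj : (σ : Set (Finset (Fin n))).PairwiseDisjoint id := fun A hA A' hA' hne =>
    Finset.disjoint_left.mpr fun y hy hy' =>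
      hne ((hσ.2.2 y (hσ.2.1 A hA y hy)).unique ⟨hA, hy⟩ ⟨hA', hy'⟩)
  have hunion : σ.biUnion id = Finset.univ.filter fun y : Fin n => (y : ℕ) < i := by
    ext y
    simp only [Finset.mem_biUnion, id, Finset.mem_filter, Finset.mem_univ, true_and]
    exact ⟨fun ⟨A, hA, hy⟩ => hσ.2.1 A hA y hy,
      fun hy => (hσ.2.2 y hy).exists.imp fun _ => id⟩
  simpa only [hunion, id, Fin.card_filter_val_lt, min_eq_right hin] using
    (Finset.card_biUnion hdisj).symm

lemma sum_filter_restrictFirst_eq_sum_extensions {M : Type*} [AddCommMonoid M]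
    (hσ : IsPartitionOn n i σ) (hx : (x : ℕ) = i) (f : Finset (Finset (Fin n)) → M) :
    ∑ π ∈ (partitionsOf n).filter (fun π => restrictFirst n i π = σ), f π
      = ∑ σ' ∈ extensions σ x,
          ∑ π ∈ (partitionsOf n).filter (fun π => restrictFirst n (i + 1) π = σ'), f π := by
  have hmaps : ∀ π ∈ (partitionsOf n).filter (fun π => restrictFirst n i π = σ),
      restrictFirst n (i + 1) π ∈ extensions σ x := by
    intro π hπ
    obtain ⟨hπP, hπσ⟩ := Finset.mem_filter.mp hπ
    have := ((Finset.mem_filter.mp hπP).2.isPartitionOn_restrictFirst (i + 1)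
      ).mem_extensions_restrictFirst hx
    rwa [restrictFirst_restrictFirst (Nat.le_succ i), hπσ] at this
  rw [← Finset.sum_fiberwise_of_maps_to hmaps]
  refine Finset.sum_congr rfl fun σ' hσ' => ?_
  obtain ⟨A, hA, rfl⟩ := Finset.mem_image.mp hσ'
  rw [Finset.filter_filter]
  refine Finset.sum_congr (Finset.filter_congr fun π _ => and_iff_right_of_imp fun h => ?_)
    fun _ _ => rfl
  rw [← restrictFirst_restrictFirst (Nat.le_succ i), h, restrictFirst_addToBlock hσ hx hA]

lemma filter_restrictFirst_eq_singleton (hσ : IsPartitionOn n i σ) (hni : n ≤ i) :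
    (partitionsOf n).filter (fun π => restrictFirst n i π = σ) = {σ} := by
  have hself : ∀ π ∈ partitionsOf n, restrictFirst n i π = π := fun π hπ =>
    restrictFirst_eq_self (Finset.mem_filter.mp hπ).2.1 fun _ _ y _ => y.isLt.trans_le hni
  have hσP : σ ∈ partitionsOf n :=
    Finset.mem_filter.mpr ⟨Finset.mem_univ _, hσ.1, fun y => hσ.2.2 y (y.isLt.trans_le hni)⟩
  rw [Finset.filter_congr fun π hπ => by rw [hself π hπ], Finset.filter_eq', if_pos hσP]

end Restriction

section Weights

variable {γ0 a p : ℝ} {n i j m : ℕ} {σ : Finset (Finset (Fin n))} {x : Fin n}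

lemma crsfW_insert (hp : 0 < p) {P : Finset (Finset (Fin n))} {B : Finset (Fin n)}
    (hB : B ∉ P) :
    crsfW γ0 a p m (insert B P)
      = γ0 * p ^ (-a) * (Real.Gamma ((B.card : ℝ) - a) / Real.Gamma (1 - a)) *
          crsfW γ0 a p m P := by
  have hpow : p ^ (-(a * ((P.card + 1 : ℕ) : ℝ))) = p ^ (-a) * p ^ (-(a * (P.card : ℝ))) := by
    rw [← Real.rpow_add hp]; push_cast; ring_nf
  rw [crsfW, crsfW, Finset.card_insert_of_notMem hB, Finset.prod_insert hB, hpow]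
  ring

lemma crsfW_insert_singleton (ha : a < 1) (hp : 0 < p) (hx : {x} ∉ σ) :
    crsfW γ0 a p m (insert {x} σ) = γ0 * p ^ (-a) * crsfW γ0 a p m σ := by
  have hΓ : Real.Gamma (1 - a) ≠ 0 := (Real.Gamma_pos_of_pos (by linarith)).ne'
  rw [crsfW_insert hp hx, Finset.card_singleton, Nat.cast_one, div_self hΓ, mul_one]

lemma crsfW_addToBlock (hp : 0 < p) {A : Finset (Fin n)} (hA : A ∈ σ) (hxA : x ∉ A) (hxσ : insert x A ∉ σ.erase A)
    (haA : (A.card : ℝ) ≠ a) :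
    crsfW γ0 a p m (addToBlock σ x A) = ((A.card : ℝ) - a) * crsfW γ0 a p m σ := by
  have hΓ : Real.Gamma (((insert x A).card : ℝ) - a)
      = ((A.card : ℝ) - a) * Real.Gamma ((A.card : ℝ) - a) := by
    rw [Finset.card_insert_of_notMem hxA, Nat.cast_succ, add_sub_right_comm,
      Real.Gamma_add_one (sub_ne_zero.mpr haA)]
  conv_rhs => rw [← Finset.insert_erase hA, crsfW_insert hp (Finset.notMem_erase A σ)]
  rw [addToBlock, crsfW_insert hp hxσ, hΓ]
  ring

lemma sum_extensions_mul_crsfW (ha : a < 1) (hp : 0 < p) (hσ : IsPartitionOn n i σ)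
    (hx : (x : ℕ) = i) (g : ℕ → ℝ) :
    ∑ σ' ∈ extensions σ x, g σ'.card * crsfW γ0 a p m σ'
      = (g (σ.card + 1) * (γ0 * p ^ (-a)) + g σ.card * ((i : ℝ) - a * σ.card)) *
          crsfW γ0 a p m σ := by
  have hxσ : ∀ B ∈ σ, x ∉ B := fun B hB => hσ.notMem hx hB
  have hsingleton : {x} ∉ σ := fun h => hxσ _ h (Finset.mem_singleton_self x)
  have hblock : ∀ A ∈ σ, g (addToBlock σ x A).card * crsfW γ0 a p m (addToBlock σ x A)
      = g σ.card * ((A.card : ℝ) - a) * crsfW γ0 a p m σ := by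
    intro A hA
    have haA : (A.card : ℝ) ≠ a := by
      have : (1 : ℝ) ≤ A.card := by
        exact_mod_cast Finset.card_pos.mpr (Finset.nonempty_iff_ne_empty.mpr
          (ne_of_mem_of_not_mem hA hσ.1))
      linarith
    rw [card_addToBlock hxσ hA, crsfW_addToBlock hp hA (hxσ A hA)
      (fun h => hxσ _ (Finset.mem_of_mem_erase h) (Finset.mem_insert_self x A)) haA, mul_assoc]
  rw [extensions, Finset.sum_image (addToBlock_injOn hxσ), Finset.sum_insert hσ.1,
    addToBlock_empty hσ.1, Finset.card_insert_of_notMem hsingleton,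
    crsfW_insert_singleton ha hp hsingleton, Finset.sum_congr rfl hblock, ← Finset.sum_mul,
    ← Finset.mul_sum, Finset.sum_sub_distrib, Finset.sum_const, nsmul_eq_mul, ← Nat.cast_sum,
    hσ.sum_card (hx ▸ x.isLt.le)]
  ring

lemma Rrec_of_le (h : n ≤ i) : Rrec γ0 a p n i j = 1 := by
  rw [Rrec, dif_pos h]

lemma Rrec_of_lt (h : i < n) :
    Rrec γ0 a p n i j = ((i : ℝ) - a * j) * Rrec γ0 a p n (i + 1) j
      + γ0 * p ^ (-a) * Rrec γ0 a p n (i + 1) (j + 1) := by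
  rw [Rrec, dif_neg h.not_ge]

end Weights

theorem sum_crsfW_filter_restrictFirst {γ0 a p : ℝ} (ha : a < 1) (hp : 0 < p) {n : ℕ} (i : ℕ)
    (σ : Finset (Finset (Fin n))) (hσ : IsPartitionOn n i σ) :
    ∑ π ∈ (partitionsOf n).filter (fun π => restrictFirst n i π = σ), crsfW γ0 a p n π
      = Rrec γ0 a p n i σ.card * crsfW γ0 a p n σ := by
  by_cases hni : n ≤ i
  · rw [filter_restrictFirst_eq_singleton hσ hni, Finset.sum_singleton, Rrec_of_le hni, one_mul]
  have hin : i < n := not_le.mp hni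
  calc _ = ∑ σ' ∈ extensions σ ⟨i, hin⟩, Rrec γ0 a p n (i + 1) σ'.card * crsfW γ0 a p n σ' := by
        rw [sum_filter_restrictFirst_eq_sum_extensions (x := ⟨i, hin⟩) hσ rfl]
        refine Finset.sum_congr rfl fun σ' hσ' => ?_
        obtain ⟨A, hA, rfl⟩ := Finset.mem_image.mp hσ'
        exact sum_crsfW_filter_restrictFirst ha hp (i + 1) _ (isPartitionOn_addToBlock hσ rfl hA)
    _ = Rrec γ0 a p n i σ.card * crsfW γ0 a p n σ := by
        rw [sum_extensions_mul_crsfW (x := ⟨i, hin⟩) ha hp hσ rfl, Rrec_of_lt hin]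
        ring
termination_by n - i

theorem crsf_size_dependent_eppf_general (i n : ℕ)
    (γ0 a p : ℝ) (ha : a < 1) (hp0 : 0 < p)
    (σ : Finset (Finset (Fin n))) (hσ : IsPartitionOn n i σ)
    (j : ℕ) (hj : σ.card = j) :
    ∑ π ∈ (partitionsOf n).filter (fun π => restrictFirst n i π = σ),
        crsfW γ0 a p n π
      = Rrec γ0 a p n i j * γ0 ^ j * p ^ (-(a * (j : ℝ))) *
          (∏ B ∈ σ, Real.Gamma ((B.card : ℝ) - a) / Real.Gamma (1 - a)) /
            Dsum γ0 a p n := by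
  rw [sum_crsfW_filter_restrictFirst ha hp0 i σ hσ, crsfW, hj]
  ring

/-- Size-dependent exchangeable partition probability function: for 1 ≤ i ≤ n and
a set partition σ of {1,…,i} with j blocks A_1,…,A_j, the sum of w_n(π) over all
set partitions π of {1,…,n} whose restriction to {1,…,i} equals σ is
R_{n,γ0,a,p}(i,j) · γ0^j · p^{−a·j} · ∏_{k=1}^j Γ(|A_k|−a)/Γ(1−a) / D_n. -/
theorem crsf_size_dependent_eppf (i n : ℕ) (hi : 1 ≤ i) (hin : i ≤ n)
    (γ0 a p : ℝ) (hγ : 0 < γ0) (ha : a < 1) (hp0 : 0 < p) (hp1 : p < 1)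
    (σ : Finset (Finset (Fin n))) (hσ : IsPartitionOn n i σ)
    (j : ℕ) (hj : σ.card = j) :
    ∑ π ∈ (partitionsOf n).filter (fun π => restrictFirst n i π = σ),
        crsfW γ0 a p n π
      = Rrec γ0 a p n i j * γ0 ^ j * p ^ (-(a * (j : ℝ))) *
          (∏ B ∈ σ, Real.Gamma ((B.card : ℝ) - a) / Real.Gamma (1 - a)) /
            Dsum γ0 a p n :=
  crsf_size_dependent_eppf_general i n γ0 a p ha hp0 σ hσ j hj
end
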